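/- Let {Σ_N} be an arbitrary sequence of strategy profiles on a sequence of instances of the binary voting model, with excess expected vote share f^N. If there exist a constant η < 0 and an infinite set 𝒩 ⊆ ℕ such that √N·f^N ≤ η for every N ∈ 𝒩, then for every N ∈ 𝒩 the fidelity satisfies A(Σ_N) ≤ 1 − (1 − exp(−2η²))·min(P_L, P_H); in particular A(Σ_N) does not converge to 1. -/

import Mathlib

/-! Conditioned on the state, the votes are independent Bernoulli variables, so `lambdaA` is a
tail probability of their sum and Hoeffding's inequality applies. If `√N·f ≤ η < 0`, then in one
of the two states the expected number of votes for the correct alternative falls short of the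
threshold by `c = |η|·√N`; that alternative then wins with probability at most
`exp (-2c²/N) = exp (-2η²)`, which costs the fidelity `(1 - exp (-2η²))` times that state's prior. -/

namespace Voting

/-- The two world states: `L` (low) and `H` (high). -/
inductive WState : Type
  | L
  | H
deriving DecidableEq

instance instFintypeWState : Fintype WState :=
  ⟨{WState.L, WState.H}, fun x => by cases x <;> simp⟩

/-- The two alternatives: `A` (accept) and `R` (reject). -/
inductive Alt : Type
  | A
  | R
deriving DecidableEq

instance instFintypeAlt : Fintype Alt :=
  ⟨{Alt.A, Alt.R}, fun x => by cases x <;> simp⟩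

/-- The shared parameters of a binary voting instance. -/
structure BParams where
  /-- majority threshold -/
  μ : ℝ
  hμ0 : 0 < μ
  hμ1 : μ < 1
  /-- prior of state `L` -/
  PL : ℝ
  /-- prior of state `H` -/
  PH : ℝ
  hPL : 0 < PL
  hPH : 0 < PH
  hPsum : PL + PH = 1
  /-- `Psig s ω` : probability of signal `s` in state `ω`; `true` is the signal `h`,
  `false` is the signal `l`. -/
  Psig : Bool → WState → ℝ
  hPsig : ∀ s ω, 0 ≤ Psig s ω
  hPsigsum : ∀ ω, Psig false ω + Psig true ω = 1
  /-- positive correlation: `P_{hH} > P_{hL}` -/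
  hcorr : Psig true WState.L < Psig true WState.H
  /-- upper bound of the utility functions -/
  B : ℕ
  hB : 0 < B

/-- A binary voting instance with `N` agents. -/
structure BInstance extends BParams where
  N : ℕ
  /-- the utility function of each agent -/
  u : Fin N → WState → Alt → ℕ
  hub : ∀ n ω a, u n ω a ≤ B
  huA : ∀ n, u n WState.L Alt.A < u n WState.H Alt.A
  huR : ∀ n, u n WState.H Alt.R < u n WState.L Alt.R

/-- A (mixed) strategy profile: for each agent, the probability of voting for `A`
upon each signal. -/
abbrev Profile (I : BInstance) : Type := Fin I.N → Bool → ℝ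

/-- All coordinates of the profile are genuine probabilities. -/
def ValidProfile (I : BInstance) (sp : Profile I) : Prop :=
  ∀ n s, 0 ≤ sp n s ∧ sp n s ≤ 1

/-- Probability that agent `n` votes for `A`, conditioned on the world state `ω`. -/
noncomputable def pA (I : BInstance) (sp : Profile I) (n : Fin I.N) (ω : WState) : ℝ :=
  I.Psig false ω * sp n false + I.Psig true ω * sp n true

open Finset in
/-- `lambdaA I sp ω` : the probability that at least `μ·N` agents vote for `A`,
conditioned on the world state `ω` (conditionally on the state, the votes are independent,
agent `n` voting for `A` with probability `pA I sp n ω`). -/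
noncomputable def lambdaA (I : BInstance) (sp : Profile I) (ω : WState) : ℝ :=
  ∑ v : Fin I.N → Bool,
    if I.μ * (I.N : ℝ) ≤ ((univ.filter fun n => v n = true).card : ℝ) then
      ∏ n, (if v n = true then pA I sp n ω else 1 - pA I sp n ω)
    else 0

/-- The fidelity of a strategy profile: the probability that the informed majority
decision is reached. -/
noncomputable def fid (I : BInstance) (sp : Profile I) : ℝ :=
  I.PL * (1 - lambdaA I sp WState.L) + I.PH * lambdaA I sp WState.H

/-- The ex-ante expected utility of agent `n` under profile `sp`. -/
noncomputable def ut (I : BInstance) (sp : Profile I) (n : Fin I.N) : ℝ :=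
  I.PL * (lambdaA I sp WState.L * (I.u n WState.L Alt.A : ℝ)
      + (1 - lambdaA I sp WState.L) * (I.u n WState.L Alt.R : ℝ))
    + I.PH * (lambdaA I sp WState.H * (I.u n WState.H Alt.A : ℝ)
      + (1 - lambdaA I sp WState.H) * (I.u n WState.H Alt.R : ℝ))

/-- A friendly agent prefers `A` in both states. -/
def Friendly (I : BInstance) (n : Fin I.N) : Prop :=
  ∀ ω, I.u n ω Alt.R < I.u n ω Alt.A

/-- An unfriendly agent prefers `R` in both states. -/
def Unfriendly (I : BInstance) (n : Fin I.N) : Prop :=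
  ∀ ω, I.u n ω Alt.A < I.u n ω Alt.R

/-- A contingent agent prefers `A` in state `H` and `R` in state `L`. -/
def Contingent (I : BInstance) (n : Fin I.N) : Prop :=
  I.u n WState.H Alt.R < I.u n WState.H Alt.A ∧ I.u n WState.L Alt.A < I.u n WState.L Alt.R

/-- A profile is regular if every friendly agent always votes for `A` and every
unfriendly agent always votes for `R`. -/
def Regular (I : BInstance) (sp : Profile I) : Prop :=
  (∀ n, Friendly I n → ∀ s, sp n s = 1) ∧ (∀ n, Unfriendly I n → ∀ s, sp n s = 0)

/-- `ε`-strong Bayes Nash Equilibrium: no coalition `D` can deviate so that no member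
is worse off and some member gains more than `ε`. -/
def IsEpsBNE (I : BInstance) (sp : Profile I) (ε : ℝ) : Prop :=
  ¬ ∃ (D : Set (Fin I.N)) (sp' : Profile I),
      ValidProfile I sp' ∧
      (∀ n, n ∉ D → sp' n = sp n) ∧
      (∀ n ∈ D, ut I sp n ≤ ut I sp' n) ∧
      (∃ n ∈ D, ut I sp n + ε < ut I sp' n)

/-- Number of friendly agents. -/
noncomputable def friendlyCount (I : BInstance) : ℕ := {n | Friendly I n}.ncard

/-- Number of unfriendly agents. -/
noncomputable def unfriendlyCount (I : BInstance) : ℕ := {n | Unfriendly I n}.ncard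

/-- Number of contingent agents. -/
noncomputable def contingentCount (I : BInstance) : ℕ := {n | Contingent I n}.ncard

/-- A sequence of binary voting instances sharing the same parameters, in which the
instance indexed by `N` has `N` agents. -/
structure BSeq where
  params : BParams
  inst : ℕ → BInstance
  hN : ∀ N, (inst N).N = N
  hshare : ∀ N, (inst N).toBParams = params

/-- A sequence of binary voting instances with fixed approximate fractions
`(αF, αU, αC)` of friendly, unfriendly and contingent agents. -/
structure BSeqFrac extends BSeq where
  αF : ℝ
  αU : ℝ
  αC : ℝ
  hαF0 : 0 ≤ αF
  hαU0 : 0 ≤ αU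
  hαC0 : 0 ≤ αC
  hαsum : αF + αU + αC = 1
  hαFμ : αF < params.μ
  hαUμ : αU < 1 - params.μ
  hNF : ∀ N : ℕ, friendlyCount (inst N) = ⌊αF * (N : ℝ)⌋₊
  hNU : ∀ N : ℕ, unfriendlyCount (inst N) = ⌊αU * (N : ℝ)⌋₊
  hNC : ∀ N : ℕ, contingentCount (inst N) = N - ⌊αF * (N : ℝ)⌋₊ - ⌊αU * (N : ℝ)⌋₊

/-- Excess expected vote share of `A` in state `H`. -/
noncomputable def fH (I : BInstance) (sp : Profile I) : ℝ :=
  (∑ n, pA I sp n WState.H) / (I.N : ℝ) - I.μ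

/-- Excess expected vote share of `R` in state `L`. -/
noncomputable def fL (I : BInstance) (sp : Profile I) : ℝ :=
  (∑ n, (1 - pA I sp n WState.L)) / (I.N : ℝ) - (1 - I.μ)

/-- The excess expected vote share `f = min (f_H, f_L)`. -/
noncomputable def fmin (I : BInstance) (sp : Profile I) : ℝ := min (fH I sp) (fL I sp)

open MeasureTheory ProbabilityTheory Finset Real Filter Topology
open scoped NNReal

section Hoeffding

open scoped unitInterval

variable {ι : Type*} [Fintype ι]

noncomputable def bernoulliPi (p : ι → I) : Measure (ι → Bool) :=
  Measure.pi fun i => Ber(true, false, p i)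

instance (p : ι → I) : IsProbabilityMeasure (bernoulliPi p) := by
  unfold bernoulliPi; infer_instance

lemma bernoulliPi_real_singleton (p : ι → I) (v : ι → Bool) :
    (bernoulliPi p).real {v} = ∏ i, if v i then (p i : ℝ) else 1 - p i := by
  rw [measureReal_def, bernoulliPi, Measure.pi_singleton, ENNReal.toReal_prod]
  refine prod_congr rfl fun i _ => ?_
  cases v i <;> simp

lemma bernoulliPi_real_setOf [DecidableEq ι] (p : ι → I) (P : (ι → Bool) → Prop)
    [DecidablePred P] :
    (bernoulliPi p).real {v | P v} =
      ∑ v, if P v then ∏ i, (if v i then (p i : ℝ) else 1 - p i) else 0 := by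
  rw [← sum_filter, ← coe_filter_univ, ← sum_measureReal_singleton]
  simp only [bernoulliPi_real_singleton]

lemma integral_bernoulliPi_indicator (p : ι → I) (i : ι) :
    ∫ v, (if v i then (1 : ℝ) else 0) ∂bernoulliPi p = p i := by
  have h := measurePreserving_eval (fun i => Ber(true, false, p i)) i
  rw [bernoulliPi, ← integral_map (f := fun b : Bool => if b then (1 : ℝ) else 0)
    h.measurable.aemeasurable (by fun_prop), h.map_eq, integral_bernoulliMeasure]
  simp

lemma hasSubgaussianMGF_bernoulliPi (p : ι → I) (i : ι) :
    HasSubgaussianMGF (fun v : ι → Bool => (if v i then 1 else 0) - (p i : ℝ)) (1 / 4)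
      (bernoulliPi p) := by
  have h := hasSubgaussianMGF_of_mem_Icc (μ := bernoulliPi p) (a := 0) (b := 1)
    (X := fun v : ι → Bool => if v i then (1 : ℝ) else 0) (by fun_prop)
    (ae_of_all _ fun v => by split <;> simp)
  rw [integral_bernoulliPi_indicator] at h
  convert h using 1
  norm_num

lemma bernoulliPi_real_sum_ge_le_of_hasSubgaussianMGF (p : ι → I) (X : ι → Bool → ℝ)
    (hX : ∀ i, HasSubgaussianMGF (fun v : ι → Bool => X i (v i)) (1 / 4) (bernoulliPi p))
    {ε : ℝ} (hε : 0 ≤ ε) :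
    (bernoulliPi p).real {v | ε ≤ ∑ i, X i (v i)} ≤ exp (-2 * ε ^ 2 / Fintype.card ι) := by
  have hindep : iIndepFun (fun i (v : ι → Bool) => X i (v i)) (bernoulliPi p) :=
    iIndepFun_pi fun _ => .of_discrete
  convert HasSubgaussianMGF.measure_sum_ge_le_of_iIndepFun hindep (fun i _ => hX i) hε using 2
  have hsum : ((∑ _i : ι, (1 / 4 : ℝ≥0) : ℝ≥0) : ℝ) = Fintype.card ι / 4 := by
    simp [div_eq_mul_inv]
  rw [hsum, show 2 * ((Fintype.card ι : ℝ) / 4) = Fintype.card ι / 2 by ring,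
    div_div_eq_mul_div]
  ring

lemma bernoulliPi_real_sum_ge_le (p : ι → I) {ε : ℝ} (hε : 0 ≤ ε) :
    (bernoulliPi p).real {v | ε ≤ ∑ i, ((if v i then 1 else 0) - (p i : ℝ))} ≤
      exp (-2 * ε ^ 2 / Fintype.card ι) :=
  bernoulliPi_real_sum_ge_le_of_hasSubgaussianMGF p (fun i b => (if b then 1 else 0) - (p i : ℝ))
    (hasSubgaussianMGF_bernoulliPi p) hε

lemma bernoulliPi_real_sum_le_le (p : ι → I) {ε : ℝ} (hε : 0 ≤ ε) :
    (bernoulliPi p).real {v | ε ≤ ∑ i, ((p i : ℝ) - if v i then 1 else 0)} ≤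
      exp (-2 * ε ^ 2 / Fintype.card ι) :=
  bernoulliPi_real_sum_ge_le_of_hasSubgaussianMGF p (fun i b => (p i : ℝ) - if b then 1 else 0)
    (fun i => by convert (hasSubgaussianMGF_bernoulliPi p i).neg using 1; ext; simp) hε

end Hoeffding

lemma not_tendsto_of_le_of_infinite {u : ℕ → ℝ} {s : Set ℕ} (hs : s.Infinite) {a b : ℝ}
    (hba : b < a) (hu : ∀ n ∈ s, u n ≤ b) : ¬ Tendsto u atTop (𝓝 a) := by
  intro h
  obtain ⟨n, hn, hlt⟩ := (Nat.frequently_atTop_iff_infinite.mpr hs).and_eventually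
    (h.eventually (lt_mem_nhds hba)) |>.exists
  exact (hu n hn).not_gt hlt

section Model

variable {I : BInstance} {sp : Profile I}

lemma pA_mem_unitInterval (hv : ValidProfile I sp) (n : Fin I.N) (ω : WState) :
    pA I sp n ω ∈ unitInterval := by
  have hl := I.hPsig false ω
  have hh := I.hPsig true ω
  have hsum := I.hPsigsum ω
  obtain ⟨hl0, hl1⟩ := hv n false
  obtain ⟨hh0, hh1⟩ := hv n true
  unfold pA
  constructor <;> nlinarith

noncomputable def voteLaw (hv : ValidProfile I sp) (ω : WState) : Measure (Fin I.N → Bool) :=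
  bernoulliPi fun n => ⟨pA I sp n ω, pA_mem_unitInterval hv n ω⟩

instance (hv : ValidProfile I sp) (ω : WState) : IsProbabilityMeasure (voteLaw hv ω) := by
  unfold voteLaw; infer_instance

lemma lambdaA_eq_voteLaw_real (hv : ValidProfile I sp) (ω : WState) :
    lambdaA I sp ω = (voteLaw hv ω).real {v | I.μ * I.N ≤ (#{n | v n = true} : ℕ)} := by
  rw [voteLaw, bernoulliPi_real_setOf]
  rfl

lemma lambdaA_nonneg (hv : ValidProfile I sp) (ω : WState) : 0 ≤ lambdaA I sp ω := by
  rw [lambdaA_eq_voteLaw_real hv]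
  exact measureReal_nonneg

lemma lambdaA_le_one (hv : ValidProfile I sp) (ω : WState) : lambdaA I sp ω ≤ 1 := by
  rw [lambdaA_eq_voteLaw_real hv]
  exact measureReal_le_one

lemma lambdaA_le_exp (hv : ValidProfile I sp) (ω : WState) {c : ℝ} (hc : 0 ≤ c)
    (hmean : ∑ n, pA I sp n ω ≤ I.μ * I.N - c) :
    lambdaA I sp ω ≤ exp (-2 * c ^ 2 / I.N) := by
  rw [lambdaA_eq_voteLaw_real hv]
  refine (measureReal_mono fun v hv' => ?_).trans
    ((bernoulliPi_real_sum_ge_le _ hc).trans_eq (by rw [Fintype.card_fin]))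
  simp only [Set.mem_ofPred_eq, natCast_card_filter] at hv' ⊢
  rw [sum_sub_distrib]
  linarith

lemma one_sub_lambdaA_le_exp (hv : ValidProfile I sp) (ω : WState) {c : ℝ} (hc : 0 ≤ c)
    (hmean : I.μ * I.N + c ≤ ∑ n, pA I sp n ω) :
    1 - lambdaA I sp ω ≤ exp (-2 * c ^ 2 / I.N) := by
  rw [lambdaA_eq_voteLaw_real hv, ← probReal_compl_eq_one_sub .of_discrete]
  refine (measureReal_mono fun v hv' => ?_).trans
    ((bernoulliPi_real_sum_le_le _ hc).trans_eq (by rw [Fintype.card_fin]))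
  simp only [Set.mem_compl_iff, Set.mem_ofPred_eq, not_le, natCast_card_filter] at hv' ⊢
  rw [sum_sub_distrib]
  linarith

lemma fid_le_one_sub_mul_min (hv : ValidProfile I sp) {e : ℝ} (he : e ≤ 1)
    (h : lambdaA I sp .H ≤ e ∨ 1 - lambdaA I sp .L ≤ e) :
    fid I sp ≤ 1 - (1 - e) * min I.PL I.PH := by
  have hPsum := I.hPsum
  have hminL := mul_le_mul_of_nonneg_left (min_le_left I.PL I.PH) (sub_nonneg.2 he)
  have hminR := mul_le_mul_of_nonneg_left (min_le_right I.PL I.PH) (sub_nonneg.2 he)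
  unfold fid
  rcases h with h | h
  · nlinarith [lambdaA_nonneg hv .L, I.hPL, I.hPH]
  · nlinarith [lambdaA_le_one hv .H, I.hPL, I.hPH]

lemma natCast_mul_fH (hN : I.N ≠ 0) :
    (I.N : ℝ) * fH I sp = ∑ n, pA I sp n .H - I.μ * I.N := by
  unfold fH
  field_simp

lemma natCast_mul_fL (hN : I.N ≠ 0) :
    (I.N : ℝ) * fL I sp = I.μ * I.N - ∑ n, pA I sp n .L := by
  simp only [fL, sum_sub_distrib, sum_const, card_univ, Fintype.card_fin, nsmul_eq_mul, mul_one]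
  field_simp
  ring

lemma fid_le_of_sqrt_mul_fmin_le (hv : ValidProfile I sp) {η : ℝ} (hη : η < 0)
    (h : √(I.N : ℝ) * fmin I sp ≤ η) :
    fid I sp ≤ 1 - (1 - exp (-2 * η ^ 2)) * min I.PL I.PH := by
  have hN : I.N ≠ 0 := by
    rintro hN
    simp only [hN, CharP.cast_eq_zero, sqrt_zero, zero_mul] at h
    linarith
  set c := -η * √(I.N : ℝ) with hc_def
  have hc : 0 ≤ c := mul_nonneg (by linarith) (sqrt_nonneg _)
  have hexp : exp (-2 * c ^ 2 / I.N) = exp (-2 * η ^ 2) := by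
    rw [hc_def, mul_pow, sq_sqrt (Nat.cast_nonneg _)]
    field_simp
  have hscale : ∀ f, √(I.N : ℝ) * f ≤ η → (I.N : ℝ) * f ≤ -c := fun f hf =>
    calc (I.N : ℝ) * f = √(I.N : ℝ) * (√(I.N : ℝ) * f) := by
          rw [← mul_assoc, mul_self_sqrt (Nat.cast_nonneg _)]
      _ ≤ √(I.N : ℝ) * η := mul_le_mul_of_nonneg_left hf (sqrt_nonneg _)
      _ = -c := by ring
  refine fid_le_one_sub_mul_min hv (exp_le_one_iff.2 (by nlinarith)) ?_
  rw [fmin, mul_min_of_nonneg _ _ (sqrt_nonneg _), min_le_iff] at h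
  rcases h with hH | hL
  · have := hscale _ hH
    rw [natCast_mul_fH hN] at this
    exact .inl (hexp ▸ lambdaA_le_exp hv .H hc (by linarith))
  · have := hscale _ hL
    rw [natCast_mul_fL hN] at this
    exact .inr (hexp ▸ one_sub_lambdaA_le_exp hv .L hc (by linarith))

end Model

/-- Theorem 4, second case. If `√N·f^N ≤ η` for some constant `η < 0`
along an infinite set `𝒩` of indices, then for every `N ∈ 𝒩` the fidelity is at most
`1 - (1 - exp(-2η²))·min(P_L, P_H)`; in particular it does not converge to `1`. -/
theorem fidelity_upper_bound_of_negative_excess_share (S : BSeq)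
    (sp : ∀ N : ℕ, Profile (S.inst N))
    (hval : ∀ N, ValidProfile (S.inst N) (sp N))
    (η : ℝ) (hη : η < 0) (Nset : Set ℕ) (hinf : Nset.Infinite)
    (hle : ∀ N ∈ Nset, Real.sqrt (N : ℝ) * fmin (S.inst N) (sp N) ≤ η) :
    (∀ N ∈ Nset, fid (S.inst N) (sp N) ≤
        1 - (1 - Real.exp (-2 * η ^ 2)) * min S.params.PL S.params.PH) ∧
    ¬ Filter.Tendsto (fun N => fid (S.inst N) (sp N)) Filter.atTop (nhds 1) := by
  have hbound : ∀ N ∈ Nset, fid (S.inst N) (sp N) ≤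
      1 - (1 - Real.exp (-2 * η ^ 2)) * min S.params.PL S.params.PH := by
    intro N hN
    have hcast : (((S.inst N).N : ℕ) : ℝ) = N := by rw [S.hN]
    have := fid_le_of_sqrt_mul_fmin_le (hval N) hη (hcast ▸ hle N hN)
    rwa [S.hshare N] at this
  refine ⟨hbound, not_tendsto_of_le_of_infinite hinf ?_ hbound⟩
  have hexp : exp (-2 * η ^ 2) < 1 := exp_lt_one_iff.2 (by nlinarith)
  exact sub_lt_self _ (mul_pos (sub_pos.2 hexp) (lt_min S.params.hPL S.params.hPH))

end Voting
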